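/- Let G be a split graph of order n that arises from the disjoint union of a clique C of order c and an independent set I of order n−c (with n−c ≥ 1) by adding m edges, each joining a vertex of C to a vertex of I. If 3c > n − 1 (i.e., c/n > 1/3 − 1/(3n)), then Mo(G) ≤ (1/8)·(n−c)·(n+c−1)². -/

import Mathlib

/-- `nG G u v` is the number of vertices of `G` whose distance to `u` is strictly
smaller than their distance to `v` (vertices at infinite distance to both `u` and `v`
are counted for neither, since the extended distance `⊤` is not `< ⊤`). -/
noncomputable def nG {V : Type*} [Fintype V] (G : SimpleGraph V) (u v : V) : ℕ :=
  Set.ncard {w : V | G.edist w u < G.edist w v}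

noncomputable def mostar {V : Type*} [Fintype V] (G : SimpleGraph V) : ℤ :=
  ∑ e ∈ (Set.toFinite G.edgeSet).toFinset,
    Sym2.lift ⟨fun u v => |(nG G u v : ℤ) - (nG G v u : ℤ)|, fun _ _ => abs_sub_comm _ _⟩ e

/-!
Sum the Mostar index over ordered pairs of adjacent vertices. Let `I` be the independent set,
`s = |I|`, and `x u` the number of neighbours in `I` of a clique vertex `u`. For a clique edge
`uv` the vertices closer to `u` are `u` and its private neighbours in `I`, so
`n(u,v) - n(v,u) = x u - x v`. For an edge from `v ∈ I` to the clique, `n(v,u) = 1` and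
`n(u,v) ≤ n - deg v`. Since `|a - b| ≤ a + b - 2ab/s` on `[0, s]`, and by Cauchy–Schwarz on the
degrees in `I`, `Mo(G) ≤ (n + c - 1) m - 2 m² / s`, where `m = ∑ x u = ∑_{v ∈ I} deg v` counts
the cross edges; the maximum of the right-hand side over `m` is `s (n + c - 1)² / 8`.
-/

open Finset

theorem abs_sub_le_add_sub_two_mul_div {a b s : ℝ} (ha : 0 ≤ a) (hb : 0 ≤ b) (has : a ≤ s)
    (hbs : b ≤ s) : |a - b| ≤ a + b - 2 / s * (a * b) := by
  have hs : 0 ≤ s := ha.trans has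
  have hb' : a * b / s ≤ b := div_le_of_le_mul₀ hs hb (by nlinarith)
  have ha' : a * b / s ≤ a := div_le_of_le_mul₀ hs ha (by nlinarith)
  rw [abs_sub_le_iff, div_mul_eq_mul_div, mul_div_assoc]
  constructor <;> linarith

theorem Finset.sum_sum_abs_sub_le {ι : Type*} (C : Finset ι) (x : ι → ℝ) {s : ℝ}
    (hx : ∀ i ∈ C, 0 ≤ x i) (hxs : ∀ i ∈ C, x i ≤ s) :
    ∑ i ∈ C, ∑ j ∈ C, |x i - x j| ≤ 2 * #C * ∑ i ∈ C, x i - 2 * (∑ i ∈ C, x i) ^ 2 / s :=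
  calc ∑ i ∈ C, ∑ j ∈ C, |x i - x j|
      ≤ ∑ i ∈ C, ∑ j ∈ C, (x i + x j - 2 / s * (x i * x j)) :=
        sum_le_sum fun i hi => sum_le_sum fun j hj =>
          abs_sub_le_add_sub_two_mul_div (hx i hi) (hx j hj) (hxs i hi) (hxs j hj)
    _ = _ := by
        simp only [sum_sub_distrib, sum_add_distrib, ← mul_sum, sum_const, nsmul_eq_mul,
          ← sum_mul]
        ring

theorem Finset.sum_mul_sub_le {ι : Type*} (I : Finset ι) (d : ι → ℝ) (a : ℝ) :
    ∑ i ∈ I, d i * (a - d i) ≤ a * ∑ i ∈ I, d i - (∑ i ∈ I, d i) ^ 2 / #I := by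
  have hCS : (∑ i ∈ I, d i) ^ 2 / #I ≤ ∑ i ∈ I, d i ^ 2 :=
    div_le_of_le_mul₀ (Nat.cast_nonneg _) (sum_nonneg fun i _ => sq_nonneg _)
      (by rw [mul_comm]; exact sq_sum_le_card_mul_sum_sq)
  have hexp : ∑ i ∈ I, d i * (a - d i) = a * ∑ i ∈ I, d i - ∑ i ∈ I, d i ^ 2 := by
    rw [mul_sum, ← sum_sub_distrib]
    exact sum_congr rfl fun i _ => by ring
  linarith

theorem Finset.sum_sum_eq_add_two_nsmul {ι M : Type*} [Fintype ι] [DecidableEq ι]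
    [AddCommMonoid M] (C : Finset ι) (F : ι → ι → M) (hF : ∀ i j, F i j = F j i)
    (hF0 : ∀ i ∉ C, ∀ j ∉ C, F i j = 0) :
    ∑ i, ∑ j, F i j = ∑ i ∈ C, ∑ j ∈ C, F i j + 2 • ∑ i ∈ Cᶜ, ∑ j ∈ C, F i j := by
  have hswap : ∑ i ∈ C, ∑ j ∈ Cᶜ, F i j = ∑ i ∈ Cᶜ, ∑ j ∈ C, F i j := by
    rw [sum_comm]
    exact sum_congr rfl fun i _ => sum_congr rfl fun j _ => hF j i
  have hzero : ∑ i ∈ Cᶜ, ∑ j ∈ Cᶜ, F i j = 0 :=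
    sum_eq_zero fun i hi => sum_eq_zero fun j hj => hF0 i (mem_compl.1 hi) j (mem_compl.1 hj)
  simp only [← sum_add_sum_compl C (fun j => F _ j), sum_add_distrib,
    ← sum_add_sum_compl C (fun i => ∑ j ∈ C, F i j + ∑ j ∈ Cᶜ, F i j)]
  rw [hswap, hzero, two_nsmul]
  abel

theorem mul_sub_two_mul_sq_div_le (a X s : ℝ) (hs : 0 ≤ s) (hX : s = 0 → X = 0) :
    a * X - 2 * X ^ 2 / s ≤ s * a ^ 2 / 8 := by
  rcases hs.eq_or_lt with rfl | hs
  · simp [hX rfl]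
  have hsq : s * a ^ 2 / 8 - (a * X - 2 * X ^ 2 / s) = (s * a - 4 * X) ^ 2 / (8 * s) := by
    field_simp
    ring
  have : 0 ≤ (s * a - 4 * X) ^ 2 / (8 * s) := by positivity
  linarith

namespace SimpleGraph

variable {V : Type*} {G : SimpleGraph V}

theorem sum_ite_adj_eq_two_nsmul_sum_edgeFinset [Fintype V] [DecidableRel G.Adj] {M : Type*}
    [AddCommMonoid M] (f : Sym2 V → M) :
    ∑ u, ∑ v, (if G.Adj u v then f s(u, v) else 0) = 2 • ∑ e ∈ G.edgeFinset, f e := by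
  classical
  calc ∑ u, ∑ v, (if G.Adj u v then f s(u, v) else 0)
      = ∑ p ∈ univ.filter (fun p : V × V => G.Adj p.1 p.2), f s(p.1, p.2) := by
        rw [sum_filter, ← Fintype.sum_prod_type']
    _ = ∑ d : G.Dart, f d.edge :=
        sum_bij' (fun p hp => ⟨p, (mem_filter.1 hp).2⟩) (fun d _ => d.toProd)
          (fun _ _ => mem_univ _) (fun d _ => mem_filter.2 ⟨mem_univ _, d.adj⟩)
          (fun _ _ => rfl) (fun _ _ => rfl) (fun _ _ => rfl)
    _ = ∑ e ∈ G.edgeFinset, ∑ d : G.Dart with d.edge = e, f e := by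
        rw [sum_fiberwise_of_maps_to' (fun d _ => mem_edgeFinset.2 d.edge_mem) f]
    _ = 2 • ∑ e ∈ G.edgeFinset, f e := by
        rw [smul_sum]
        refine sum_congr rfl fun e he => ?_
        rw [sum_const, G.dart_edge_fiber_card e (mem_edgeFinset.1 he)]

theorem two_mul_mostar [Fintype V] [DecidableRel G.Adj] :
    2 * (mostar G : ℝ) = ∑ u, ∑ v, if G.Adj u v then |(nG G u v : ℝ) - nG G v u| else 0 := by
  have hE : (Set.toFinite G.edgeSet).toFinset = G.edgeFinset := by ext; simp
  have := sum_ite_adj_eq_two_nsmul_sum_edgeFinset (G := G) fun e => ((Sym2.lift ⟨fun u v =>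
    |(nG G u v : ℤ) - (nG G v u : ℤ)|, fun _ _ => abs_sub_comm _ _⟩ e : ℤ) : ℝ)
  rw [nsmul_eq_mul, Nat.cast_ofNat] at this
  rw [mostar, hE, Int.cast_sum, ← this]
  simp

theorem one_le_nG [Fintype V] {u v : V} (hadj : G.Adj u v) : 1 ≤ nG G u v := by
  rw [nG, Nat.one_le_iff_ne_zero, Ne, Set.ncard_eq_zero]
  exact Set.nonempty_iff_ne_empty.1 ⟨u, by simpa using edist_pos_of_ne hadj.ne⟩

theorem nG_add_degree_le [Fintype V] [DecidableRel G.Adj] {u v : V} (hadj : G.Adj u v) :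
    nG G u v + G.degree v ≤ Fintype.card V := by
  classical
  have hsub : {w : V | G.edist w u < G.edist w v} ⊆
      ↑(insert v ((G.neighborFinset v).erase u))ᶜ := by
    intro w hw
    rw [coe_compl, Set.mem_compl_iff]
    intro hmem
    simp only [coe_insert, coe_erase, Set.mem_insert_iff, Set.mem_sdiff, mem_coe,
      mem_neighborFinset, Set.mem_singleton_iff] at hmem
    simp only [Set.mem_ofPred_eq] at hw
    rcases hmem with rfl | ⟨hvw, hwu⟩
    · simp at hw
    · rw [edist_eq_one_iff_adj.2 hvw.symm, Order.lt_one_iff, edist_eq_zero_iff] at hw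
      exact hwu hw
  have hcard : #(insert v ((G.neighborFinset v).erase u)) = G.degree v := by
    rw [card_insert_of_notMem (by simp), card_erase_of_mem (by simpa using hadj.symm),
      card_neighborFinset_eq_degree]
    have := G.degree_pos_iff_exists_adj v |>.2 ⟨u, hadj.symm⟩
    omega
  have := Set.ncard_le_ncard hsub
  rw [Set.ncard_coe_finset, card_compl, hcard] at this
  rw [nG]
  have := card_le_univ (insert v ((G.neighborFinset v).erase u))
  omega

theorem two_le_edist {u v : V} (hne : u ≠ v) (hnadj : ¬G.Adj u v) : 2 ≤ G.edist u v := by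
  have h : 1 < G.edist u v := by
    rw [← not_le, edist_le_one_iff_adj_or_eq]
    tauto
  calc (2 : ℕ∞) = 1 + 1 := one_add_one_eq_two.symm
    _ ≤ G.edist u v := Order.add_one_le_of_lt h

section Split

variable {C : Finset V} (hK : G.IsClique (C : Set V)) (hI : G.IsIndepSet (C : Set V)ᶜ)

include hI in
theorem degree_eq_card_filter_of_notMem [Fintype V] [DecidableRel G.Adj] {u : V} (hu : u ∉ C) :
    G.degree u = #{v ∈ C | G.Adj u v} := by
  rw [← card_neighborFinset_eq_degree]
  congr 1
  ext v
  simp only [mem_neighborFinset, mem_filter, iff_and_self]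
  exact fun huv => by_contra fun hv => hI hu hv huv.ne huv

include hI in
theorem sum_card_filter_adj_eq_sum_degree [Fintype V] [DecidableEq V] [DecidableRel G.Adj] :
    ∑ u ∈ C, #{v ∈ Cᶜ | G.Adj u v} = ∑ v ∈ Cᶜ, G.degree v := by
  have := sum_card_bipartiteAbove_eq_sum_card_bipartiteBelow (s := C) (t := Cᶜ) (r := G.Adj)
  simp only [bipartiteAbove, bipartiteBelow] at this
  rw [this]
  refine sum_congr rfl fun v hv => ?_
  rw [degree_eq_card_filter_of_notMem hI (mem_compl.1 hv)]
  simp only [G.adj_comm]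

include hK in
theorem edist_le_one_of_mem {u w : V} (hw : w ∈ C) (hu : u ∈ C) : G.edist w u ≤ 1 :=
  edist_le_one_iff_adj_or_eq.2 <| (eq_or_ne w u).symm.imp (hK hw hu) id

include hK hI

theorem edist_le_two_of_adj {u w x : V} (hu : u ∈ C) (hwx : G.Adj w x) : G.edist w u ≤ 2 := by
  by_cases hw : w ∈ C
  · exact (edist_le_one_of_mem hK hw hu).trans one_le_two
  have hx : x ∈ C := by_contra fun hx => hI hw hx hwx.ne hwx
  calc G.edist w u ≤ G.edist w x + G.edist x u := G.edist_triangle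
    _ ≤ 1 + 1 := add_le_add (edist_eq_one_iff_adj.2 hwx).le (edist_le_one_of_mem hK hx hu)
    _ = 2 := one_add_one_eq_two

-- Unless `w` is isolated (and `G.edist w t = ⊤`), it is within distance `2` of every clique vertex.
theorem edist_le_edist_of_not_adj {u w t : V} (hu : u ∈ C) (hwt : w ≠ t) (hnadj : ¬G.Adj w t) :
    G.edist w u ≤ G.edist w t := by
  obtain htop | htop := eq_or_ne (G.edist w t) ⊤
  · exact htop ▸ le_top
  obtain ⟨p⟩ := reachable_of_edist_ne_top htop
  cases p with
  | nil => exact absurd rfl hwt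
  | cons hwx _ => exact (edist_le_two_of_adj hK hI hu hwx).trans (two_le_edist hwt hnadj)

theorem nG_eq_one_of_notMem [Fintype V] {u v : V} (hu : u ∈ C) (hv : v ∉ C)
    (hadj : G.Adj u v) :
    nG G v u = 1 := by
  suffices {w : V | G.edist w v < G.edist w u} = {v} by rw [nG, this, Set.ncard_singleton]
  ext w
  simp only [Set.mem_ofPred_eq, Set.mem_singleton_iff]
  refine ⟨fun hw => by_contra fun hwv => ?_, fun hw => ?_⟩
  · by_cases hwC : w ∈ C
    · have := hw.trans_le (edist_le_one_of_mem hK hwC hu)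
      exact hwv (edist_eq_zero_iff.1 (Order.lt_one_iff.1 this))
    · exact (edist_le_edist_of_not_adj hK hI hu hwv (hI hwC hv hwv)).not_gt hw
  · subst hw
    simpa using edist_pos_of_ne hadj.ne.symm

theorem nG_eq_card_sdiff_add_one [Fintype V] [DecidableEq V] [DecidableRel G.Adj] {u v : V}
    (hu : u ∈ C) (hv : v ∈ C) (huv : u ≠ v) :
    nG G u v = #({w ∈ Cᶜ | G.Adj u w} \ {w ∈ Cᶜ | G.Adj v w}) + 1 := by
  suffices {w : V | G.edist w u < G.edist w v} =
      ↑(insert u ({w ∈ Cᶜ | G.Adj u w} \ {w ∈ Cᶜ | G.Adj v w})) by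
    rw [nG, this, Set.ncard_coe_finset, card_insert_of_notMem (by simp [hu])]
  ext w
  simp only [Set.mem_ofPred_eq, coe_insert, Set.mem_insert_iff, mem_coe, mem_sdiff, mem_filter,
    mem_compl]
  constructor
  · intro hw
    by_contra! h
    by_cases hwC : w ∈ C
    · rw [edist_eq_one_iff_adj.2 (hK hwC hu h.1)] at hw
      exact (edist_le_one_of_mem hK hwC hv).not_gt hw
    · have hwu : G.Adj w u := by_contra fun hwu =>
        (edist_le_edist_of_not_adj hK hI hv h.1 hwu).not_gt hw
      have hwv : G.Adj w v := (h.2 ⟨hwC, hwu.symm⟩).2.symm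
      rw [edist_eq_one_iff_adj.2 hwv, edist_eq_one_iff_adj.2 hwu] at hw
      exact lt_irrefl _ hw
  · rintro (rfl | ⟨⟨hwC, huw⟩, hvw⟩)
    · simpa using edist_pos_of_ne huv
    · have hwv : w ≠ v := fun h => hwC (h ▸ hv)
      rw [edist_eq_one_iff_adj.2 huw.symm]
      exact (by norm_num : (1 : ℕ∞) < 2).trans_le (two_le_edist hwv fun h => hvw ⟨hwC, h.symm⟩)

theorem nG_sub_nG_of_mem [Fintype V] [DecidableEq V] [DecidableRel G.Adj] {u v : V} (hu : u ∈ C)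
    (hv : v ∈ C) (huv : u ≠ v) :
    (nG G u v : ℝ) - nG G v u = #{w ∈ Cᶜ | G.Adj u w} - #{w ∈ Cᶜ | G.Adj v w} := by
  rw [nG_eq_card_sdiff_add_one hK hI hu hv huv, nG_eq_card_sdiff_add_one hK hI hv hu huv.symm]
  have hu' := card_sdiff_add_card_inter {w ∈ Cᶜ | G.Adj u w} {w ∈ Cᶜ | G.Adj v w}
  have hv' := card_sdiff_add_card_inter {w ∈ Cᶜ | G.Adj v w} {w ∈ Cᶜ | G.Adj u w}
  rw [inter_comm] at hv'
  rw [← hu', ← hv']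
  push_cast
  ring

theorem abs_nG_sub_nG_le_of_notMem [Fintype V] [DecidableRel G.Adj] {u v : V} (hu : u ∉ C)
    (hv : v ∈ C) (hadj : G.Adj u v) :
    |(nG G u v : ℝ) - nG G v u| ≤ Fintype.card V - 1 - G.degree u := by
  have h1 : nG G u v = 1 := nG_eq_one_of_notMem hK hI hv hu hadj.symm
  have h2 : 1 ≤ nG G v u := one_le_nG hadj.symm
  have h3 : nG G v u + G.degree u ≤ Fintype.card V := nG_add_degree_le hadj.symm
  rw [h1, Nat.cast_one, abs_sub_comm, abs_of_nonneg (by simp [h2])]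
  have : ((nG G v u + G.degree u : ℕ) : ℝ) ≤ Fintype.card V := by exact_mod_cast h3
  push_cast at this
  linarith

theorem mostar_le_of_isClique_of_isIndepSet [Fintype V] [DecidableEq V] [DecidableRel G.Adj] :
    (mostar G : ℝ) ≤ (Fintype.card V + #C - 1) * ∑ u ∈ Cᶜ, (G.degree u : ℝ) -
      2 * (∑ u ∈ Cᶜ, (G.degree u : ℝ)) ^ 2 / #Cᶜ := by
  set m := ∑ u ∈ Cᶜ, (G.degree u : ℝ)
  set F : V → V → ℝ := fun u v => if G.Adj u v then |(nG G u v : ℝ) - nG G v u| else 0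
  have hF : ∀ u v, F u v = F v u := fun u v => by simp only [F, G.adj_comm, abs_sub_comm]
  have hF0 : ∀ u ∉ C, ∀ v ∉ C, F u v = 0 := fun u hu v hv =>
    if_neg fun huv => hI hu hv huv.ne huv
  have hm : ∑ u ∈ C, (#{v ∈ Cᶜ | G.Adj u v} : ℝ) = m := by
    simp only [m]
    exact_mod_cast sum_card_filter_adj_eq_sum_degree hI
  have hCC : ∑ u ∈ C, ∑ v ∈ C, F u v ≤ 2 * #C * m - 2 * m ^ 2 / #Cᶜ :=
    calc ∑ u ∈ C, ∑ v ∈ C, F u v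
        ≤ ∑ u ∈ C, ∑ v ∈ C, |(#{w ∈ Cᶜ | G.Adj u w} : ℝ) - #{w ∈ Cᶜ | G.Adj v w}| := by
          refine sum_le_sum fun u hu => sum_le_sum fun v hv => ?_
          by_cases huv : G.Adj u v
          · simp only [F, if_pos huv, nG_sub_nG_of_mem hK hI hu hv huv.ne, le_refl]
          · simp only [F, if_neg huv, abs_nonneg]
      _ ≤ 2 * #C * m - 2 * m ^ 2 / #Cᶜ := by
          rw [← hm]
          exact sum_sum_abs_sub_le C _ (fun _ _ => Nat.cast_nonneg _)
            fun _ _ => Nat.cast_le.2 (card_filter_le _ _)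
  have hIC : ∑ u ∈ Cᶜ, ∑ v ∈ C, F u v ≤ (Fintype.card V - 1) * m - m ^ 2 / #Cᶜ :=
    calc ∑ u ∈ Cᶜ, ∑ v ∈ C, F u v
        ≤ ∑ u ∈ Cᶜ, ∑ v ∈ C,
            if G.Adj u v then (Fintype.card V - 1 - G.degree u : ℝ) else 0 := by
          refine sum_le_sum fun u hu => sum_le_sum fun v hv => ?_
          by_cases huv : G.Adj u v
          · simp only [F, if_pos huv]
            exact abs_nG_sub_nG_le_of_notMem hK hI (mem_compl.1 hu) hv huv
          · simp only [F, if_neg huv, le_refl]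
      _ = ∑ u ∈ Cᶜ, (G.degree u : ℝ) * (Fintype.card V - 1 - G.degree u) := by
          refine sum_congr rfl fun u hu => ?_
          rw [← sum_filter, sum_const, nsmul_eq_mul,
            ← degree_eq_card_filter_of_notMem hI (mem_compl.1 hu)]
      _ ≤ _ := sum_mul_sub_le _ _ _
  have h2 := two_mul_mostar (G := G)
  rw [sum_sum_eq_add_two_nsmul C F hF hF0, two_nsmul] at h2
  have : 2 * m ^ 2 / #Cᶜ = 2 * (m ^ 2 / #Cᶜ) := mul_div_assoc _ _ _
  linarith

end Split

end SimpleGraph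

theorem mostar_split_le_large_clique_general {V : Type*} [Fintype V] (G : SimpleGraph V)
    (n c : ℕ) (hn : Fintype.card V = n)
    (C : Finset V) (hC : C.card = c)
    (hclique : ∀ u ∈ C, ∀ v ∈ C, u ≠ v → G.Adj u v)
    (hindep : ∀ u ∉ C, ∀ v ∉ C, ¬ G.Adj u v) :
    (mostar G : ℝ) ≤ (1 / 8 : ℝ) * ((n : ℝ) - (c : ℝ)) * ((n : ℝ) + (c : ℝ) - 1) ^ 2 := by
  classical
  have hK : G.IsClique (C : Set V) := hclique
  have hI : G.IsIndepSet (C : Set V)ᶜ := fun u hu v hv _ => hindep u hu v hv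
  have hs : (#Cᶜ : ℝ) = n - c := by
    rw [card_compl, Nat.cast_sub (card_le_univ C), hn, hC]
  have hm : (#Cᶜ : ℝ) = 0 → ∑ u ∈ Cᶜ, (G.degree u : ℝ) = 0 := fun h => by
    rw [card_eq_zero.1 (Nat.cast_eq_zero.1 h), sum_empty]
  calc (mostar G : ℝ)
      ≤ (Fintype.card V + #C - 1) * ∑ u ∈ Cᶜ, (G.degree u : ℝ) -
          2 * (∑ u ∈ Cᶜ, (G.degree u : ℝ)) ^ 2 / #Cᶜ :=
        SimpleGraph.mostar_le_of_isClique_of_isIndepSet hK hI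
    _ ≤ #Cᶜ * (Fintype.card V + #C - 1) ^ 2 / 8 :=
        mul_sub_two_mul_sq_div_le _ _ _ (Nat.cast_nonneg _) hm
    _ = (1 / 8 : ℝ) * ((n : ℝ) - (c : ℝ)) * ((n : ℝ) + (c : ℝ) - 1) ^ 2 := by
        rw [hs, hn, hC]
        ring

/-- For a split graph of order `n` with clique of order `c`, independent set of order
`n - c ≥ 1` and `m` cross edges: if `3c > n - 1` then `Mo(G) ≤ (1/8)·(n-c)·(n+c-1)²`. -/
theorem mostar_split_le_large_clique {V : Type*} [Fintype V] [DecidableEq V] (G : SimpleGraph V)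
    [DecidableRel G.Adj] (n c m : ℕ) (hn : Fintype.card V = n)
    (C : Finset V) (hC : C.card = c)
    (hclique : ∀ u ∈ C, ∀ v ∈ C, u ≠ v → G.Adj u v)
    (hindep : ∀ u ∉ C, ∀ v ∉ C, ¬ G.Adj u v)
    (hm : (G.edgeFinset.filter fun e => ∃ v ∈ e, v ∉ C).card = m)
    (hcn : c < n) (h3c : (n : ℤ) - 1 < 3 * (c : ℤ)) :
    (mostar G : ℝ) ≤ (1 / 8 : ℝ) * ((n : ℝ) - (c : ℝ)) * ((n : ℝ) + (c : ℝ) - 1) ^ 2 :=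
  mostar_split_le_large_clique_general G n c hn C hC hclique hindep
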